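/- arXiv:2403.12577 — 7 statements merged into one kernel-verified Lean document; each statement's English description precedes it below -/
import Mathlib

section
/- (Key Lemma 2.1, abstract two-level stability.) Let W be a complete subspace of V and let G : V → W denote the a-orthogonal projection onto W. Assume: (i) there is ε > 0 such that ‖v − Gv‖ ≤ ε ⦀v − Gv⦀ for all v ∈ V (duality estimate); (ii) vectors φ_1, …, φ_N span W, are b-orthonormal (b(φ_k, φ_l) = δ_{kl}), and satisfy a(φ_k, w) = λ_k b(φ_k, w) for all w ∈ W with reals λ_1, …, λ_N; (iii) for a fixed index j set u_h := φ_j, and let û ∈ V and λ̂ > 0 satisfy ‖û‖ = 1 and a(û, w) = λ̂ b(û, w) for all w ∈ W; (iv) there is Λ_sep ≥ 0 with λ̂ ≤ Λ_sep·|λ_k − λ̂| for every k ≠ j (separation condition); (v) b(û, u_h) ≥ 0. Then ‖û − u_h‖ ≤ √2·(1 + Λ_sep)·ε·⦀û − u_h⦀. -/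
set_option maxHeartbeats 1000000


open RealInnerProductSpace

/-- Key Lemma 2.1, abstract two-level stability.  `V` carries the energy scalar
product `a = ⟪·,·⟫` with norm `⦀·⦀` and `b(u,v) := ⟪ι u, ι v⟫` is the `H`-scalar
product with seminorm `‖ι ·‖`.  With `G` the `a`-orthogonal projection onto the
complete subspace `W`, spanned by the `b`-orthonormal discrete eigenvectors
`φ_1, …, φ_N` with eigenvalues `λ_1, …, λ_N`, with the duality estimate
`‖v − Gv‖ ≤ ε ⦀v − Gv⦀`, a fine eigenvector `û` with `‖û‖ = 1`,
`a(û, w) = λ̂ b(û, w)` on `W`, the separation `λ̂ ≤ Λ_sep·|λ_k − λ̂|` for `k ≠ j`,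
and `b(û, φ_j) ≥ 0`, one has
`‖û − φ_j‖ ≤ √2·(1 + Λ_sep)·ε·⦀û − φ_j⦀`. -/
theorem key_lemma_two_level_stability
    {V : Type*} [NormedAddCommGroup V] [InnerProductSpace ℝ V]
    {H : Type*} [NormedAddCommGroup H] [InnerProductSpace ℝ H]
    (ι : V →ₗ[ℝ] H)
    (W : Submodule ℝ V) [CompleteSpace W]
    (ε : ℝ) (hε : 0 < ε)
    (hdual : ∀ v : V, ‖ι (v - (W.orthogonalProjection v : V))‖
      ≤ ε * ‖v - (W.orthogonalProjection v : V)‖)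
    (N : ℕ) (φ : Fin N → V) (lam : Fin N → ℝ)
    (hspan : W = Submodule.span ℝ (Set.range φ))
    (horth : ∀ k l : Fin N, ⟪ι (φ k), ι (φ l)⟫ = if k = l then (1 : ℝ) else 0)
    (heig : ∀ k : Fin N, ∀ w ∈ W, ⟪φ k, w⟫ = lam k * ⟪ι (φ k), ι w⟫)
    (j : Fin N)
    (uhat : V) (lamhat : ℝ) (hlamhat : 0 < lamhat) (huhatnorm : ‖ι uhat‖ = 1)
    (huhateig : ∀ w ∈ W, ⟪uhat, w⟫ = lamhat * ⟪ι uhat, ι w⟫)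
    (Λsep : ℝ) (hΛsep : 0 ≤ Λsep)
    (hsep : ∀ k : Fin N, k ≠ j → lamhat ≤ Λsep * |lam k - lamhat|)
    (hpos : 0 ≤ ⟪ι uhat, ι (φ j)⟫) :
    ‖ι (uhat - φ j)‖ ≤ Real.sqrt 2 * (1 + Λsep) * ε * ‖uhat - φ j‖ := by
  classical
  set g : V := (W.orthogonalProjection uhat : V) with hg
  set e : V := uhat - g with he_def
  have hφW : ∀ k, φ k ∈ W := fun k => hspan ▸ Submodule.subset_span ⟨k, rfl⟩
  have hgW : g ∈ W := (W.orthogonalProjection uhat).2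
  have heorth : ∀ w ∈ W, ⟪e, w⟫ = 0 := fun w hw =>
    W.starProjection_inner_eq_zero uhat w hw
  set c : Fin N → ℝ := fun k => ⟪ι uhat, ι (φ k)⟫ with hc
  set d : Fin N → ℝ := fun k => ⟪ι e, ι (φ k)⟫ with hd
  have hιe : ι e = ι uhat - ι g := by rw [he_def, map_sub]
  have hιg : ι g = ι uhat - ι e := by rw [hιe]; abel
  -- eigenvalue relation
  have hrel : ∀ k, (lam k - lamhat) * c k = lam k * d k := by
    intro k
    have h1 : ⟪uhat, φ k⟫ = lamhat * c k := huhateig _ (hφW k)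
    have h2 : ⟪φ k, g⟫ = lam k * ⟪ι (φ k), ι g⟫ := heig k g hgW
    have h3 : ⟪e, φ k⟫ = 0 := heorth _ (hφW k)
    rw [he_def, inner_sub_left] at h3
    have h4 : ⟪g, φ k⟫ = ⟪φ k, g⟫ := real_inner_comm _ _
    have h5 : ⟪ι (φ k), ι g⟫ = c k - d k := by
      rw [real_inner_comm, hιg, inner_sub_left]
    have h6 : lamhat * c k = lam k * (c k - d k) := by
      rw [← h1, ← h5, ← h2, ← h4]; linarith
    nlinarith [h6]
  -- coefficient bound for k ≠ j
  have hck : ∀ k, k ≠ j → (c k)^2 ≤ (1+Λsep)^2 * (d k)^2 := by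
    intro k hk
    have hs := hsep k hk
    have habs : 0 < |lam k - lamhat| := by
      rcases lt_or_eq_of_le (abs_nonneg (lam k - lamhat)) with h | h
      · exact h
      · exfalso; nlinarith
    have hlamk : |lam k| ≤ (1+Λsep) * |lam k - lamhat| := by
      have h7 : |lam k| ≤ |lam k - lamhat| + |lamhat| := by
        calc |lam k| = |(lam k - lamhat) + lamhat| := by ring_nf
          _ ≤ |lam k - lamhat| + |lamhat| := abs_add_le _ _
      rw [abs_of_pos hlamhat] at h7
      nlinarith
    have h1 : |lam k - lamhat| * |c k| = |lam k| * |d k| := by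
      rw [← abs_mul, ← abs_mul, hrel k]
    have h2 : |lam k - lamhat| * |c k| ≤ (1+Λsep) * |lam k - lamhat| * |d k| := by
      rw [h1]; nlinarith [abs_nonneg (d k)]
    have h3 : |c k| ≤ (1+Λsep) * |d k| := by
      nlinarith [abs_nonneg (c k), abs_nonneg (d k)]
    nlinarith [mul_self_le_mul_self (abs_nonneg (c k)) h3, sq_abs (c k), sq_abs (d k),
      abs_nonneg (d k)]
  -- inner products with the orthonormal family
  have hφsum : ∀ (cc : Fin N → ℝ) (k : Fin N),
      ⟪ι (φ k), ∑ l, cc l • ι (φ l)⟫ = cc k := by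
    intro cc k
    rw [inner_sum]
    simp only [real_inner_smul_right, horth, mul_ite, mul_one, mul_zero]
    simp
  have hinφ : ∀ (x : H), ⟪x, ∑ l, ⟪x, ι (φ l)⟫ • ι (φ l)⟫
      = ∑ l, ⟪x, ι (φ l)⟫^2 := by
    intro x
    rw [inner_sum]
    exact Finset.sum_congr rfl fun l _ => by rw [real_inner_smul_right]; ring
  have hnormsum : ∀ (cc : Fin N → ℝ),
      ⟪(∑ l, cc l • ι (φ l)), (∑ l, cc l • ι (φ l))⟫ = ∑ l, (cc l)^2 := by
    intro cc
    rw [sum_inner]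
    refine Finset.sum_congr rfl fun l _ => ?_
    rw [real_inner_smul_left, hφsum]; ring
  -- Pythagoras expansion
  have hexp : ∀ (x : H),
      ‖x - ∑ l, ⟪x, ι (φ l)⟫ • ι (φ l)‖^2 = ‖x‖^2 - ∑ l, ⟪x, ι (φ l)⟫^2 := by
    intro x
    have hn : ‖(∑ l, ⟪x, ι (φ l)⟫ • ι (φ l))‖^2 = ∑ l, ⟪x, ι (φ l)⟫^2 := by
      rw [← real_inner_self_eq_norm_sq]; exact hnormsum _
    rw [norm_sub_sq_real, hinφ x, hn]; ring
  -- expansion of ι g in the orthonormal family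
  have hgexp : (ι g) = ∑ l, ⟪ι g, ι (φ l)⟫ • ι (φ l) := by
    have hmem : g ∈ Submodule.span ℝ (Set.range φ) := hspan ▸ hgW
    obtain ⟨a, ha⟩ := (Submodule.mem_span_range_iff_exists_fun ℝ).mp hmem
    have hag : ι g = ∑ l, a l • ι (φ l) := by
      rw [← ha, map_sum]
      exact Finset.sum_congr rfl fun l _ => by rw [map_smul]
    rw [hag]
    refine Finset.sum_congr rfl fun l _ => ?_
    congr 1
    rw [real_inner_comm, hφsum]
  have hcd : ∀ k, ⟪ι g, ι (φ k)⟫ = c k - d k := by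
    intro k; rw [hιg, inner_sub_left]
  -- the residuals coincide
  set r : H := ι e - ∑ l, d l • ι (φ l) with hr
  have hres : ι uhat - ∑ l, c l • ι (φ l) = r := by
    have h1 : (∑ l, c l • ι (φ l)) - (∑ l, d l • ι (φ l)) = ι g := by
      rw [← Finset.sum_sub_distrib, hgexp]
      refine Finset.sum_congr rfl fun l _ => ?_
      rw [hcd, ← sub_smul]
    rw [hr, hιe, ← h1]; abel
  have hA : ‖r‖^2 = ‖ι e‖^2 - ∑ l, (d l)^2 := by
    rw [hr]; simp only [hd]; exact hexp (ι e)
  have hB : ‖r‖^2 = 1 - ∑ l, (c l)^2 := by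
    rw [← hres]; simp only [hc]
    have h := hexp (ι uhat)
    rw [huhatnorm] at h
    rw [h]; norm_num
  have hrnn : (0:ℝ) ≤ ‖r‖^2 := sq_nonneg _
  -- c j ≤ 1
  have hφjnorm : ‖ι (φ j)‖ = 1 := by
    have h : ⟪ι (φ j), ι (φ j)⟫ = 1 := by rw [horth]; simp
    rw [real_inner_self_eq_norm_sq] at h
    nlinarith [norm_nonneg (ι (φ j))]
  have hcj1 : c j ≤ 1 := by
    have h := abs_real_inner_le_norm (ι uhat) (ι (φ j))
    rw [huhatnorm, hφjnorm] at h
    calc c j ≤ |c j| := le_abs_self _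
      _ ≤ 1 := by simpa using h
  have hcj0 : 0 ≤ c j := hpos
  -- sum splitting
  have hsplit : ∑ l, (c l)^2 = (c j)^2 + ∑ l ∈ Finset.univ.erase j, (c l)^2 :=
    (Finset.add_sum_erase Finset.univ (fun l => (c l)^2) (Finset.mem_univ j)).symm
  have hsum1 : ∑ l ∈ Finset.univ.erase j, (c l)^2
      ≤ (1+Λsep)^2 * ∑ l ∈ Finset.univ.erase j, (d l)^2 := by
    rw [Finset.mul_sum]
    exact Finset.sum_le_sum fun l hl => hck l (Finset.ne_of_mem_erase hl)
  have hsum2 : ∑ l ∈ Finset.univ.erase j, (d l)^2 ≤ ∑ l, (d l)^2 :=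
    Finset.sum_le_sum_of_subset_of_nonneg (Finset.erase_subset _ _)
      (fun l _ _ => sq_nonneg _)
  have hone : (1:ℝ) ≤ (1+Λsep)^2 := by nlinarith
  -- main quadratic estimate
  have hmain : 1 - (c j)^2 ≤ (1+Λsep)^2 * ‖ι e‖^2 := by
    have h1 : 1 - (c j)^2 = ‖r‖^2 + ∑ l ∈ Finset.univ.erase j, (c l)^2 := by
      rw [hB, hsplit]; ring
    have h2 : ∑ l, (d l)^2 + ‖r‖^2 = ‖ι e‖^2 := by linarith [hA]
    calc 1 - (c j)^2 = ‖r‖^2 + ∑ l ∈ Finset.univ.erase j, (c l)^2 := h1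
      _ ≤ ‖r‖^2 + (1+Λsep)^2 * ∑ l ∈ Finset.univ.erase j, (d l)^2 := by linarith
      _ ≤ (1+Λsep)^2 * ‖r‖^2 + (1+Λsep)^2 * ∑ l, (d l)^2 := by
          nlinarith [hsum2, hone, hrnn,
            Finset.sum_nonneg (fun l (_ : l ∈ Finset.univ.erase j) => sq_nonneg (d l))]
      _ = (1+Λsep)^2 * ‖ι e‖^2 := by rw [← h2]; ring
  -- b-norm of the error
  have hLHS : ‖ι (uhat - φ j)‖^2 = 2 - 2 * c j := by
    rw [map_sub, norm_sub_sq_real, huhatnorm, hφjnorm]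
    have h : ⟪ι uhat, ι (φ j)⟫ = c j := rfl
    rw [h]; ring
  -- a-norm comparison
  have haorth : ⟪e, g - φ j⟫ = 0 := heorth _ (Submodule.sub_mem W hgW (hφW j))
  have hdecomp : uhat - φ j = e + (g - φ j) := by rw [he_def]; abel
  have hanorm : ‖uhat - φ j‖^2 = ‖e‖^2 + ‖g - φ j‖^2 := by
    rw [hdecomp, norm_add_sq_real, haorth]; ring
  have hele : ‖e‖ ≤ ‖uhat - φ j‖ := by
    nlinarith [norm_nonneg e, norm_nonneg (uhat - φ j), sq_nonneg (‖g - φ j‖)]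
  have hdual' : ‖ι e‖ ≤ ε * ‖e‖ := hdual uhat
  have hιee : ‖ι e‖ ≤ ε * ‖uhat - φ j‖ := by
    calc ‖ι e‖ ≤ ε * ‖e‖ := hdual'
      _ ≤ ε * ‖uhat - φ j‖ := by nlinarith
  -- put everything together at the level of squares
  have hsq : ‖ι (uhat - φ j)‖^2 ≤ (Real.sqrt 2 * (1 + Λsep) * ε * ‖uhat - φ j‖)^2 := by
    have h2 : (Real.sqrt 2)^2 = 2 := Real.sq_sqrt (by norm_num)
    have hchain : 2 - 2 * c j ≤ 2 * ((1+Λsep)^2 * ‖ι e‖^2) := by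
      nlinarith [hmain, hcj0, hcj1]
    have hιe2 : ‖ι e‖^2 ≤ (ε * ‖uhat - φ j‖)^2 := by
      have h := mul_self_le_mul_self (norm_nonneg (ι e)) hιee
      nlinarith [h]
    calc ‖ι (uhat - φ j)‖^2 = 2 - 2 * c j := hLHS
      _ ≤ 2 * ((1+Λsep)^2 * ‖ι e‖^2) := hchain
      _ ≤ 2 * ((1+Λsep)^2 * (ε * ‖uhat - φ j‖)^2) := by nlinarith [hone]
      _ = (Real.sqrt 2 * (1 + Λsep) * ε * ‖uhat - φ j‖)^2 := by
          linear_combination (-(1+Λsep)^2 * ε^2 * ‖uhat - φ j‖^2) * h2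
  have hRHSnn : 0 ≤ Real.sqrt 2 * (1 + Λsep) * ε * ‖uhat - φ j‖ := by
    have h := Real.sqrt_nonneg 2
    positivity
  calc ‖ι (uhat - φ j)‖ = Real.sqrt (‖ι (uhat - φ j)‖^2) := (Real.sqrt_sq (norm_nonneg _)).symm
    _ ≤ Real.sqrt ((Real.sqrt 2 * (1 + Λsep) * ε * ‖uhat - φ j‖)^2) := Real.sqrt_le_sqrt hsq
    _ = Real.sqrt 2 * (1 + Λsep) * ε * ‖uhat - φ j‖ := Real.sqrt_sq hRHSnn
end

section
/- (Lemma 2.2.a, abstract form.) Let (λ_h, u_h) be a coarse discrete eigenpair on W and (λ̂_h, û_h) a fine discrete eigenpair on Ŵ with W ⊆ Ŵ. Assume 0 ≤ κ < 1, 0 ≤ λ̂_h ≤ λ_h, and the stability bound (λ̂_h + λ_h)/2 · ‖ê‖² ≤ κ · ⦀ê⦀². Then (1 − κ)·⦀ê⦀² ≤ Res(ê) ≤ λ_h − λ̂_h ≤ ⦀ê⦀². -/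
open RealInnerProductSpace

/-- Lemma 2.2.a, abstract form.  `V` carries the energy scalar product `a = ⟪·,·⟫`
and `b(u,v) := ⟪ι u, ι v⟫` models the `L²` scalar product.  Given a coarse discrete
eigenpair `(λ_h, u_h)` on `W` and a fine discrete eigenpair `(λ̂_h, û_h)` on `W' ⊇ W`,
with `0 ≤ κ < 1`, `0 ≤ λ̂_h ≤ λ_h`, and the stability bound
`(λ̂_h + λ_h)/2 · ‖ê‖² ≤ κ · ⦀ê⦀²` for `ê := û_h − u_h`, one has
`(1 − κ)·⦀ê⦀² ≤ Res(ê) ≤ λ_h − λ̂_h ≤ ⦀ê⦀²`, where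
`Res(φ) := λ_h b(u_h, φ) − a(u_h, φ)`. -/
theorem lemma22a
    {V : Type*} [NormedAddCommGroup V] [InnerProductSpace ℝ V]
    {H : Type*} [NormedAddCommGroup H] [InnerProductSpace ℝ H]
    (ι : V →ₗ[ℝ] H)
    (W W' : Submodule ℝ V) (hWW' : W ≤ W')
    (lamh : ℝ) (uh : V) (huhW : uh ∈ W) (huhnorm : ‖ι uh‖ = 1)
    (huheig : ∀ w ∈ W, ⟪uh, w⟫ = lamh * ⟪ι uh, ι w⟫)
    (lamhat : ℝ) (uhat : V) (huhatW' : uhat ∈ W') (huhatnorm : ‖ι uhat‖ = 1)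
    (huhateig : ∀ w ∈ W', ⟪uhat, w⟫ = lamhat * ⟪ι uhat, ι w⟫)
    (κ : ℝ) (hκ0 : 0 ≤ κ) (hκ1 : κ < 1)
    (hlam0 : 0 ≤ lamhat) (hlaml : lamhat ≤ lamh)
    (hstab : (lamhat + lamh) / 2 * ‖ι (uhat - uh)‖ ^ 2 ≤ κ * ‖uhat - uh‖ ^ 2) :
    (1 - κ) * ‖uhat - uh‖ ^ 2
        ≤ lamh * ⟪ι uh, ι (uhat - uh)⟫ - ⟪uh, uhat - uh⟫ ∧
    lamh * ⟪ι uh, ι (uhat - uh)⟫ - ⟪uh, uhat - uh⟫ ≤ lamh - lamhat ∧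
    lamh - lamhat ≤ ‖uhat - uh‖ ^ 2 := by
  have h1 : ⟪uhat, uhat⟫ = lamhat * ⟪ι uhat, ι uhat⟫ := huhateig uhat huhatW'
  have h2 : ⟪uh, uh⟫ = lamh * ⟪ι uh, ι uh⟫ := huheig uh huhW
  have h3 : ⟪uhat, uh⟫ = lamhat * ⟪ι uhat, ι uh⟫ := huhateig uh (hWW' huhW)
  have n1 : ⟪ι uhat, ι uhat⟫ = 1 := by
    rw [real_inner_self_eq_norm_sq, huhatnorm]; norm_num
  have n2 : ⟪ι uh, ι uh⟫ = 1 := by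
    rw [real_inner_self_eq_norm_sq, huhnorm]; norm_num
  have hVnorm : ‖uhat - uh‖ ^ 2 = ⟪uhat, uhat⟫ - 2 * ⟪uhat, uh⟫ + ⟪uh, uh⟫ := by
    rw [← real_inner_self_eq_norm_sq]
    simp only [inner_sub_left, inner_sub_right, real_inner_comm uh uhat]
    ring
  have hHnorm : ‖ι (uhat - uh)‖ ^ 2 = 2 - 2 * ⟪ι uhat, ι uh⟫ := by
    rw [← real_inner_self_eq_norm_sq, map_sub]
    simp only [inner_sub_left, inner_sub_right, real_inner_comm (ι uh) (ι uhat)]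
    rw [n1, n2]; ring
  have hA : ⟪uh, uhat - uh⟫ = ⟪uhat, uh⟫ - ⟪uh, uh⟫ := by
    simp only [inner_sub_right, real_inner_comm uh uhat]
  have hB : ⟪ι uh, ι (uhat - uh)⟫ = ⟪ι uhat, ι uh⟫ - ⟪ι uh, ι uh⟫ := by
    rw [map_sub]
    simp only [inner_sub_right, real_inner_comm (ι uh) (ι uhat)]
  set c := ⟪ι uhat, ι uh⟫ with hc
  have hcle : c ≤ 1 := by nlinarith [sq_nonneg ‖ι (uhat - uh)‖]
  have hV : ‖uhat - uh‖ ^ 2 = lamhat + lamh - 2 * (lamhat * c) := by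
    rw [hVnorm, h1, h2, h3, n1, n2]; ring
  have hAA : ⟪uh, uhat - uh⟫ = lamhat * c - lamh := by
    rw [hA, h3, h2, n2]; ring
  have hBB : ⟪ι uh, ι (uhat - uh)⟫ = c - 1 := by rw [hB, n2]
  rw [hV, hHnorm] at hstab
  rw [hV, hAA, hBB]
  refine ⟨by nlinarith, by nlinarith [mul_nonneg (sub_nonneg.2 hlaml) (sub_nonneg.2 hcle)], by nlinarith [mul_nonneg hlam0 (sub_nonneg.2 hcle)]⟩
end

section
/- (Lemma 2.2.b, abstract upper bound for the Riesz representative of the residual.) Let (λ_h, u_h) be a coarse discrete eigenpair on W and (λ̂_h, û_h) a fine discrete eigenpair on Ŵ with W ⊆ Ŵ. Let v̂ ∈ Ŵ satisfy a(v̂, w) = Res(w) for all w ∈ Ŵ (the a-Riesz representative of the residual in Ŵ). Assume there are constants c₁, c₂ ≥ 0 with ‖v̂‖ ≤ c₁·⦀v̂⦀ and ‖λ̂_h û_h − λ_h u_h‖ ≤ c₂·⦀ê⦀. Then ⦀v̂⦀ ≤ (1 + c₁·c₂)·⦀ê⦀. -/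
open RealInnerProductSpace

/-- Lemma 2.2.b, abstract upper bound for the Riesz representative of the residual.
With a coarse discrete eigenpair `(λ_h, u_h)` on `W`, a fine discrete eigenpair
`(λ̂_h, û_h)` on `W' ⊇ W`, and `v̂ ∈ W'` the `a`-Riesz representative of the residual
`Res(φ) := λ_h b(u_h, φ) − a(u_h, φ)` in `W'`, if `‖v̂‖ ≤ c₁·⦀v̂⦀` and
`‖λ̂_h û_h − λ_h u_h‖ ≤ c₂·⦀ê⦀` for constants `c₁, c₂ ≥ 0`, then
`⦀v̂⦀ ≤ (1 + c₁·c₂)·⦀ê⦀` with `ê := û_h − u_h`. -/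
theorem lemma22b
    {V : Type*} [NormedAddCommGroup V] [InnerProductSpace ℝ V]
    {H : Type*} [NormedAddCommGroup H] [InnerProductSpace ℝ H]
    (ι : V →ₗ[ℝ] H)
    (W W' : Submodule ℝ V) (hWW' : W ≤ W')
    (lamh : ℝ) (uh : V) (huhW : uh ∈ W) (huhnorm : ‖ι uh‖ = 1)
    (huheig : ∀ w ∈ W, ⟪uh, w⟫ = lamh * ⟪ι uh, ι w⟫)
    (lamhat : ℝ) (uhat : V) (huhatW' : uhat ∈ W') (huhatnorm : ‖ι uhat‖ = 1)
    (huhateig : ∀ w ∈ W', ⟪uhat, w⟫ = lamhat * ⟪ι uhat, ι w⟫)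
    (vhat : V) (hvhatW' : vhat ∈ W')
    (hriesz : ∀ w ∈ W', ⟪vhat, w⟫ = lamh * ⟪ι uh, ι w⟫ - ⟪uh, w⟫)
    (c₁ c₂ : ℝ) (hc₁ : 0 ≤ c₁) (hc₂ : 0 ≤ c₂)
    (hdual : ‖ι vhat‖ ≤ c₁ * ‖vhat‖)
    (hnl : ‖lamhat • ι uhat - lamh • ι uh‖ ≤ c₂ * ‖uhat - uh‖) :
    ‖vhat‖ ≤ (1 + c₁ * c₂) * ‖uhat - uh‖ := by
  have key : ⟪vhat, vhat⟫ =
      ⟪uhat - uh, vhat⟫ - ⟪lamhat • ι uhat - lamh • ι uh, ι vhat⟫ := by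
    have h1 := hriesz vhat hvhatW'
    have h2 := huhateig vhat hvhatW'
    rw [inner_sub_left, inner_sub_left, inner_smul_left, inner_smul_left, h2]
    simp only [starRingEnd_apply, star_trivial]
    linarith [h1]
  have hb : ⟪vhat, vhat⟫ ≤ ‖uhat - uh‖ * ‖vhat‖ + (c₂ * ‖uhat - uh‖) * (c₁ * ‖vhat‖) := by
    rw [key]
    have h3 := real_inner_le_norm (uhat - uh) vhat
    have h4 : -⟪lamhat • ι uhat - lamh • ι uh, ι vhat⟫ ≤
        ‖lamhat • ι uhat - lamh • ι uh‖ * ‖ι vhat‖ := by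
      have := real_inner_le_norm (-(lamhat • ι uhat - lamh • ι uh)) (ι vhat)
      rw [← neg_sub, inner_neg_left] at this
      simpa [norm_sub_rev] using this
    have h5 : ‖lamhat • ι uhat - lamh • ι uh‖ * ‖ι vhat‖ ≤
        (c₂ * ‖uhat - uh‖) * (c₁ * ‖vhat‖) :=
      mul_le_mul hnl hdual (norm_nonneg _) (by positivity)
    linarith
  rcases eq_or_lt_of_le (norm_nonneg vhat) with h0 | h0
  · rw [← h0]; positivity
  · have hsq : ‖vhat‖ * ‖vhat‖ ≤ ((1 + c₁ * c₂) * ‖uhat - uh‖) * ‖vhat‖ := by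
      rw [← real_inner_self_eq_norm_mul_norm]
      nlinarith [hb]
    exact le_of_mul_le_mul_right hsq h0
end

section
/- (Residual–eigenvalue identity from the proof of Lemma 2.2.a.) Let (λ_h, u_h) be a coarse discrete eigenpair on W and (λ̂_h, û_h) a fine discrete eigenpair on Ŵ with W ⊆ Ŵ. Then Res(ê) = (λ_h − λ̂_h)·(1 − ‖ê‖²/2). -/
open RealInnerProductSpace

/-- Residual–eigenvalue identity from the proof of Lemma 2.2.a: with
`ê := û_h − u_h` and `Res(φ) := λ_h b(u_h, φ) − a(u_h, φ)`, one has
`Res(ê) = (λ_h − λ̂_h)·(1 − ‖ê‖²/2)`. -/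
theorem residual_eigenvalue_identity
    {V : Type*} [NormedAddCommGroup V] [InnerProductSpace ℝ V]
    {H : Type*} [NormedAddCommGroup H] [InnerProductSpace ℝ H]
    (ι : V →ₗ[ℝ] H)
    (W W' : Submodule ℝ V) (hWW' : W ≤ W')
    (lamh : ℝ) (uh : V) (huhW : uh ∈ W) (huhnorm : ‖ι uh‖ = 1)
    (huheig : ∀ w ∈ W, ⟪uh, w⟫ = lamh * ⟪ι uh, ι w⟫)
    (lamhat : ℝ) (uhat : V) (huhatW' : uhat ∈ W') (huhatnorm : ‖ι uhat‖ = 1)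
    (huhateig : ∀ w ∈ W', ⟪uhat, w⟫ = lamhat * ⟪ι uhat, ι w⟫) :
    lamh * ⟪ι uh, ι (uhat - uh)⟫ - ⟪uh, uhat - uh⟫
      = (lamh - lamhat) * (1 - ‖ι (uhat - uh)‖ ^ 2 / 2) := by
  have h1 : ⟪uh, uh⟫ = lamh * ⟪ι uh, ι uh⟫ := huheig uh huhW
  have h2 : ⟪uhat, uh⟫ = lamhat * ⟪ι uhat, ι uh⟫ := huhateig uh (hWW' huhW)
  have h3 : ⟪uh, uhat⟫ = lamhat * ⟪ι uh, ι uhat⟫ := by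
    rw [real_inner_comm, h2, real_inner_comm]
  have h4 : ⟪ι uh, ι uh⟫ = 1 := by
    rw [real_inner_self_eq_norm_sq, huhnorm]; ring
  have h5 : ⟪ι uhat, ι uhat⟫ = 1 := by
    rw [real_inner_self_eq_norm_sq, huhatnorm]; ring
  have h6 : ‖ι uhat - ι uh‖ ^ 2 = 2 - 2 * ⟪ι uh, ι uhat⟫ := by
    rw [norm_sub_sq_real, huhnorm, huhatnorm, real_inner_comm]; ring
  rw [map_sub, inner_sub_right, inner_sub_right, h1, h3, h4, h6]
  ring
end

section
/- (Step seven of the proof of the key Lemma 2.1.) Let H be a real inner product space and let u, v ∈ H with ‖u‖ = ‖v‖ = 1 and ⟨u, v⟩ ≥ 0. Then for every t ∈ ℝ one has ‖u − v‖ ≤ √2·‖u − t·v‖. -/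
open RealInnerProductSpace

/-- Step seven of the proof of the key Lemma 2.1: for unit vectors `u, v` with
`⟨u, v⟩ ≥ 0`, one has `‖u − v‖ ≤ √2·‖u − t·v‖` for every real `t`. -/
theorem norm_sub_le_sqrt_two_mul_norm_sub_smul
    {H : Type*} [NormedAddCommGroup H] [InnerProductSpace ℝ H]
    (u v : H) (hu : ‖u‖ = 1) (hv : ‖v‖ = 1) (huv : 0 ≤ ⟪u, v⟫) :
    ∀ t : ℝ, ‖u - v‖ ≤ Real.sqrt 2 * ‖u - t • v‖ := by
  intro t
  have hs1 : ⟪u, v⟫ ≤ 1 := by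
    have := real_inner_le_norm u v
    rw [hu, hv] at this; linarith
  have h1 : ‖u - v‖ ^ 2 = 2 - 2 * ⟪u, v⟫ := by
    rw [@norm_sub_sq_real, hu, hv]; ring
  have h2 : ‖u - t • v‖ ^ 2 = 1 - 2 * t * ⟪u, v⟫ + t ^ 2 := by
    rw [@norm_sub_sq_real, hu, norm_smul, real_inner_smul_right, hv]
    simp [abs_mul_abs_self]
    ring
  have key : ‖u - v‖ ^ 2 ≤ 2 * ‖u - t • v‖ ^ 2 := by
    rw [h1, h2]; nlinarith [sq_nonneg (t - 1), sq_nonneg t]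
  calc ‖u - v‖ = Real.sqrt (‖u - v‖ ^ 2) := by
        rw [Real.sqrt_sq (norm_nonneg _)]
    _ ≤ Real.sqrt (2 * ‖u - t • v‖ ^ 2) := Real.sqrt_le_sqrt key
    _ = Real.sqrt 2 * ‖u - t • v‖ := by
        rw [Real.sqrt_mul (by norm_num), Real.sqrt_sq (norm_nonneg _)]
end

section
/- (Steps three to five of the proof of the key Lemma 2.1: spectral-gap bound for the projected eigenvector.) Let φ_1, …, φ_N ∈ V span a subspace W, be b-orthonormal (b(φ_k, φ_l) = δ_{kl}), and satisfy a(φ_k, w) = λ_k·b(φ_k, w) for all w ∈ W with reals λ_1, …, λ_N, and let G : V → W denote the a-orthogonal projection onto W. Let û ∈ V and λ̂ > 0 satisfy a(û, w) = λ̂·b(û, w) for all w ∈ W, and suppose there is Λ_sep ≥ 0 with λ̂ ≤ Λ_sep·|λ_k − λ̂| for every index k ≠ j, where j is a fixed index. Then ‖Gû − b(Gû, φ_j)·φ_j‖ ≤ Λ_sep·‖û − Gû‖. -/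
open RealInnerProductSpace

/-!
Expand `Gû` in the `b`-orthonormal basis: `Gû = ∑ₖ cₖ φₖ` with `cₖ = b(Gû, φₖ)`. Testing the
eigenproblem for `û` with `φₖ` and using Galerkin orthogonality `a(û − Gû, φₖ) = 0` together with
the eigenproblem for `φₖ` gives `(λₖ − λ̂) cₖ = λ̂ b(û − Gû, φₖ)`. The separation assumption then
bounds `|cₖ| ≤ Λ_sep |b(û − Gû, φₖ)|` for `k ≠ j`, and Parseval on the left together with Bessel
on the right yields the claim.
-/

open Finset

theorem Orthonormal.sum_inner_smul_eq_of_mem_span {𝕜 ι E : Type*} [RCLike 𝕜] [Fintype ι]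
    [NormedAddCommGroup E] [InnerProductSpace 𝕜 E] {v : ι → E} (hv : Orthonormal 𝕜 v) {x : E}
    (hx : x ∈ Submodule.span 𝕜 (Set.range v)) :
    ∑ i, inner 𝕜 (v i) x • v i = x := by
  obtain ⟨c, rfl⟩ := (Submodule.mem_span_range_iff_exists_fun 𝕜).mp hx
  simp only [hv.inner_right_fintype]

theorem Orthonormal.norm_sum_smul_le {ι E : Type*} [NormedAddCommGroup E]
    [InnerProductSpace ℝ E] {v : ι → E} (hv : Orthonormal ℝ v) {s : Finset ι} {c : ι → ℝ}
    {y : E} {Λ : ℝ} (hΛ : 0 ≤ Λ) (hc : ∀ i ∈ s, |c i| ≤ Λ * |⟪v i, y⟫|) :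
    ‖∑ i ∈ s, c i • v i‖ ≤ Λ * ‖y‖ := by
  have hparseval : ‖∑ i ∈ s, c i • v i‖ ^ 2 = ∑ i ∈ s, c i ^ 2 := by
    rw [← real_inner_self_eq_norm_sq, hv.inner_sum]
    simp only [conj_trivial, sq]
  have hbessel : ∑ i ∈ s, ⟪v i, y⟫ ^ 2 ≤ ‖y‖ ^ 2 := by
    simpa only [Real.norm_eq_abs, sq_abs] using hv.sum_inner_products_le y (s := s)
  refine (pow_le_pow_iff_left₀ (norm_nonneg _) (by positivity) two_ne_zero).mp ?_
  calc ‖∑ i ∈ s, c i • v i‖ ^ 2 = ∑ i ∈ s, c i ^ 2 := hparseval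
    _ ≤ ∑ i ∈ s, Λ ^ 2 * ⟪v i, y⟫ ^ 2 := by
      refine sum_le_sum fun i hi => ?_
      rw [← sq_abs (c i), ← sq_abs ⟪v i, y⟫, ← mul_pow]
      exact pow_le_pow_left₀ (abs_nonneg _) (hc i hi) 2
    _ = Λ ^ 2 * ∑ i ∈ s, ⟪v i, y⟫ ^ 2 := (mul_sum ..).symm
    _ ≤ (Λ * ‖y‖) ^ 2 := by
      rw [mul_pow]
      exact mul_le_mul_of_nonneg_left hbessel (sq_nonneg Λ)

theorem abs_le_mul_abs_of_mul_eq_of_le_mul_abs {d c β lam Λ : ℝ} (hlam : 0 < lam)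
    (hgap : lam ≤ Λ * |d|) (h : d * c = lam * β) : |c| ≤ Λ * |β| := by
  refine le_of_mul_le_mul_left ?_ hlam
  calc lam * |c| ≤ Λ * |d| * |c| := mul_le_mul_of_nonneg_right hgap (abs_nonneg c)
    _ = lam * (Λ * |β|) := by
      rw [mul_assoc, ← abs_mul, h, abs_mul, abs_of_pos hlam]
      ring

theorem galerkin_coeff_eq {V H : Type*} [NormedAddCommGroup V] [InnerProductSpace ℝ V]
    [NormedAddCommGroup H] [InnerProductSpace ℝ H] (ι : V →ₗ[ℝ] H) {u g e : V} {μ lam : ℝ}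
    (horth : ⟪u - g, e⟫ = 0) (he : ⟪e, g⟫ = μ * ⟪ι e, ι g⟫)
    (hu : ⟪u, e⟫ = lam * ⟪ι u, ι e⟫) :
    (μ - lam) * ⟪ι e, ι g⟫ = lam * ⟪ι e, ι (u - g)⟫ := by
  rw [inner_sub_left, real_inner_comm e g, he, hu, real_inner_comm (ι e) (ι u)] at horth
  rw [map_sub, inner_sub_right]
  linarith

/-- Steps three to five of the proof of the key Lemma 2.1: spectral-gap bound for the
projected eigenvector.  With `b`-orthonormal eigenvectors `φ_1, …, φ_N` spanning `W`,
`G` the `a`-orthogonal projection onto `W` (characterised by `Gv ∈ W` and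
`a(v − Gv, w) = 0` for all `w ∈ W`), an eigenvector `û` with `a(û, w) = λ̂ b(û, w)`
on `W` and the separation `λ̂ ≤ Λ_sep·|λ_k − λ̂|` for all `k ≠ j`, one has
`‖Gû − b(Gû, φ_j)·φ_j‖ ≤ Λ_sep·‖û − Gû‖` in the `b`-seminorm `‖v‖ = ‖ι v‖`. -/
theorem spectral_gap_bound
    {V : Type*} [NormedAddCommGroup V] [InnerProductSpace ℝ V]
    {H : Type*} [NormedAddCommGroup H] [InnerProductSpace ℝ H]
    (ι : V →ₗ[ℝ] H)
    (N : ℕ) (φ : Fin N → V) (lam : Fin N → ℝ)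
    (W : Submodule ℝ V) (hspan : W = Submodule.span ℝ (Set.range φ))
    (horth : ∀ k l : Fin N, ⟪ι (φ k), ι (φ l)⟫ = if k = l then (1 : ℝ) else 0)
    (heig : ∀ k : Fin N, ∀ w ∈ W, ⟪φ k, w⟫ = lam k * ⟪ι (φ k), ι w⟫)
    (G : V → V) (hGmem : ∀ v : V, G v ∈ W)
    (hGproj : ∀ v : V, ∀ w ∈ W, ⟪v - G v, w⟫ = 0)
    (uhat : V) (lamhat : ℝ) (hlamhat : 0 < lamhat)
    (huhateig : ∀ w ∈ W, ⟪uhat, w⟫ = lamhat * ⟪ι uhat, ι w⟫)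
    (j : Fin N) (Λsep : ℝ) (hΛsep : 0 ≤ Λsep)
    (hsep : ∀ k : Fin N, k ≠ j → lamhat ≤ Λsep * |lam k - lamhat|) :
    ‖ι (G uhat - ⟪ι (G uhat), ι (φ j)⟫ • φ j)‖ ≤ Λsep * ‖ι (uhat - G uhat)‖ := by
  classical
  have hv : Orthonormal ℝ (ι ∘ φ) := orthonormal_iff_ite.mpr horth
  have hφW : ∀ k, φ k ∈ W := fun k => hspan ▸ Submodule.subset_span ⟨k, rfl⟩
  have hGspan : ι (G uhat) ∈ Submodule.span ℝ (Set.range (ι ∘ φ)) := by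
    rw [Set.range_comp, ← Submodule.map_span, ← hspan]
    exact Submodule.mem_map_of_mem (hGmem uhat)
  have hexpand : ι (G uhat - ⟪ι (G uhat), ι (φ j)⟫ • φ j)
      = ∑ k ∈ univ.erase j, ⟪ι (φ k), ι (G uhat)⟫ • ι (φ k) := by
    rw [map_sub, map_smul, real_inner_comm, sum_erase_eq_sub (mem_univ j)]
    exact congrArg (· - _) (hv.sum_inner_smul_eq_of_mem_span hGspan).symm
  rw [hexpand]
  refine hv.norm_sum_smul_le hΛsep fun k hk => ?_
  exact abs_le_mul_abs_of_mul_eq_of_le_mul_abs hlamhat (hsep k (ne_of_mem_erase hk))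
    (galerkin_coeff_eq ι (hGproj uhat _ (hφW k)) (heig k _ (hGmem uhat)) (huhateig _ (hφW k)))
end

section
/- (Estimate (eqccadd7) in the proof of the key Lemma 2.1.) Let φ_1, …, φ_N ∈ V span a subspace W, be b-orthonormal (b(φ_k, φ_l) = δ_{kl}), and satisfy a(φ_k, w) = λ_k·b(φ_k, w) for all w ∈ W with reals λ_1, …, λ_N, and let G : V → W denote the a-orthogonal projection onto W. Assume there is ε > 0 with ‖v − Gv‖ ≤ ε·⦀v − Gv⦀ for all v ∈ V. Let û ∈ V and λ̂ > 0 satisfy a(û, w) = λ̂·b(û, w) for all w ∈ W, and suppose there is Λ_sep ≥ 0 with λ̂ ≤ Λ_sep·|λ_k − λ̂| for every index k ≠ j, where j is a fixed index. Then ‖Gû − b(Gû, φ_j)·φ_j‖ ≤ Λ_sep·ε·⦀û − φ_j⦀. -/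
open RealInnerProductSpace

/-!
Write `Gû = ∑ₖ cₖ φₖ` with `cₖ = b(Gû, φₖ)`. Testing the Galerkin orthogonality
`a(û - Gû, φₖ) = 0` against the eigenrelations of `û` and of `φₖ` gives
`(λₖ - λ̂) cₖ = λ̂ b(û - Gû, φₖ)`, so the separation bounds `|cₖ| ≤ Λ_sep |b(û - Gû, φₖ)|`
for `k ≠ j`. Bessel's inequality then yields `‖Gû - cⱼ φⱼ‖ ≤ Λ_sep ‖û - Gû‖`, and the
duality estimate together with the best approximation property of `G` in the energy norm
finishes the proof.
-/

theorem abs_le_mul_abs_of_sub_mul_eq {μ ν c r Λ : ℝ} (hν : 0 < ν) (hsep : ν ≤ Λ * |μ - ν|)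
    (h : (μ - ν) * c = ν * r) : |c| ≤ Λ * |r| := by
  have hgap : 0 < |μ - ν| := by
    refine abs_pos.2 fun hμ => ?_
    rw [hμ, abs_zero, mul_zero] at hsep
    exact hsep.not_gt hν
  refine le_of_mul_le_mul_left ?_ hgap
  calc |μ - ν| * |c| = ν * |r| := by rw [← abs_mul, h, abs_mul, abs_of_pos hν]
    _ ≤ Λ * |μ - ν| * |r| := by gcongr
    _ = |μ - ν| * (Λ * |r|) := by ring

theorem norm_sub_le_norm_sub_of_inner_eq_zero {E : Type*} [NormedAddCommGroup E]
    [InnerProductSpace ℝ E] {v g w : E} (h : ⟪v - g, g - w⟫ = 0) : ‖v - g‖ ≤ ‖v - w‖ := by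
  have hpyth := norm_add_sq_eq_norm_sq_add_norm_sq_real h
  rw [sub_add_sub_cancel] at hpyth
  refine le_of_pow_le_pow_left₀ two_ne_zero (norm_nonneg _) ?_
  rw [sq, sq, hpyth]
  exact le_add_of_nonneg_right (mul_self_nonneg _)

namespace Orthonormal

variable {E : Type*} [NormedAddCommGroup E] [InnerProductSpace ℝ E]
  {κ : Type*} [Fintype κ] {e : κ → E}

theorem sum_inner_smul_eq_of_mem_span_s14 (he : Orthonormal ℝ e) {x : E}
    (hx : x ∈ Submodule.span ℝ (Set.range e)) : ∑ k, ⟪e k, x⟫ • e k = x := by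
  obtain ⟨c, rfl⟩ := (Submodule.mem_span_range_iff_exists_fun ℝ).1 hx
  simp only [he.inner_right_fintype]

theorem norm_sub_inner_smul_sq_of_mem_span [DecidableEq κ] (he : Orthonormal ℝ e) {x : E}
    (hx : x ∈ Submodule.span ℝ (Set.range e)) (j : κ) :
    ‖x - ⟪e j, x⟫ • e j‖ ^ 2 = ∑ k ∈ Finset.univ.erase j, ⟪e k, x⟫ ^ 2 := by
  have hexp : x - ⟪e j, x⟫ • e j = ∑ k ∈ Finset.univ.erase j, ⟪e k, x⟫ • e k := by
    have hsum := he.sum_inner_smul_eq_of_mem_span_s14 hx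
    rw [← Finset.add_sum_erase _ _ (Finset.mem_univ j)] at hsum
    exact sub_eq_of_eq_add' hsum.symm
  rw [hexp, ← real_inner_self_eq_norm_sq, he.inner_sum]
  simp only [conj_trivial, sq]

theorem norm_sub_inner_smul_le_of_mem_span (he : Orthonormal ℝ e) {x y : E}
    (hx : x ∈ Submodule.span ℝ (Set.range e)) (j : κ) {C : ℝ} (hC : 0 ≤ C)
    (hcoef : ∀ k, k ≠ j → |⟪e k, x⟫| ≤ C * |⟪e k, y⟫|) :
    ‖x - ⟪e j, x⟫ • e j‖ ≤ C * ‖y‖ := by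
  classical
  refine le_of_pow_le_pow_left₀ two_ne_zero (by positivity) ?_
  calc ‖x - ⟪e j, x⟫ • e j‖ ^ 2 = ∑ k ∈ Finset.univ.erase j, ⟪e k, x⟫ ^ 2 :=
        he.norm_sub_inner_smul_sq_of_mem_span hx j
    _ ≤ ∑ k ∈ Finset.univ.erase j, C ^ 2 * ‖⟪e k, y⟫‖ ^ 2 := by
        refine Finset.sum_le_sum fun k hk => ?_
        rw [← sq_abs, Real.norm_eq_abs, ← mul_pow]
        gcongr
        exact hcoef k (Finset.ne_of_mem_erase hk)
    _ = C ^ 2 * ∑ k ∈ Finset.univ.erase j, ‖⟪e k, y⟫‖ ^ 2 := by rw [Finset.mul_sum]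
    _ ≤ C ^ 2 * ‖y‖ ^ 2 := by gcongr; exact he.sum_inner_products_le y
    _ = (C * ‖y‖) ^ 2 := by ring

end Orthonormal

theorem sub_mul_inner_map_eq_of_galerkin {V H : Type*} [NormedAddCommGroup V]
    [InnerProductSpace ℝ V] [NormedAddCommGroup H] [InnerProductSpace ℝ H] (ι : V →ₗ[ℝ] H)
    {u g φ : V} {μ ν : ℝ} (hproj : ⟪u - g, φ⟫ = 0) (hu : ⟪u, φ⟫ = ν * ⟪ι u, ι φ⟫)
    (hφ : ⟪φ, g⟫ = μ * ⟪ι φ, ι g⟫) :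
    (μ - ν) * ⟪ι φ, ι g⟫ = ν * ⟪ι φ, ι (u - g)⟫ := by
  rw [inner_sub_left, real_inner_comm φ g, hφ, hu, real_inner_comm (ι φ) (ι u)] at hproj
  rw [map_sub, inner_sub_right]
  linear_combination -hproj

/-- Estimate (eqccadd7) in the proof of the key Lemma 2.1.  With `b`-orthonormal
eigenvectors `φ_1, …, φ_N` spanning `W`, `G` the `a`-orthogonal projection onto `W`
(characterised by `Gv ∈ W` and `a(v − Gv, w) = 0` for all `w ∈ W`), the duality
estimate `‖v − Gv‖ ≤ ε·⦀v − Gv⦀`, an eigenvector `û` with `a(û, w) = λ̂ b(û, w)` on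
`W`, and the separation `λ̂ ≤ Λ_sep·|λ_k − λ̂|` for all `k ≠ j`, one has
`‖Gû − b(Gû, φ_j)·φ_j‖ ≤ Λ_sep·ε·⦀û − φ_j⦀`. -/
theorem estimate_eqccadd7
    {V : Type*} [NormedAddCommGroup V] [InnerProductSpace ℝ V]
    {H : Type*} [NormedAddCommGroup H] [InnerProductSpace ℝ H]
    (ι : V →ₗ[ℝ] H)
    (N : ℕ) (φ : Fin N → V) (lam : Fin N → ℝ)
    (W : Submodule ℝ V) (hspan : W = Submodule.span ℝ (Set.range φ))
    (horth : ∀ k l : Fin N, ⟪ι (φ k), ι (φ l)⟫ = if k = l then (1 : ℝ) else 0)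
    (heig : ∀ k : Fin N, ∀ w ∈ W, ⟪φ k, w⟫ = lam k * ⟪ι (φ k), ι w⟫)
    (G : V → V) (hGmem : ∀ v : V, G v ∈ W)
    (hGproj : ∀ v : V, ∀ w ∈ W, ⟪v - G v, w⟫ = 0)
    (ε : ℝ) (hε : 0 < ε)
    (hdual : ∀ v : V, ‖ι (v - G v)‖ ≤ ε * ‖v - G v‖)
    (uhat : V) (lamhat : ℝ) (hlamhat : 0 < lamhat)
    (huhateig : ∀ w ∈ W, ⟪uhat, w⟫ = lamhat * ⟪ι uhat, ι w⟫)
    (j : Fin N) (Λsep : ℝ) (hΛsep : 0 ≤ Λsep)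
    (hsep : ∀ k : Fin N, k ≠ j → lamhat ≤ Λsep * |lam k - lamhat|) :
    ‖ι (G uhat - ⟪ι (G uhat), ι (φ j)⟫ • φ j)‖ ≤ Λsep * ε * ‖uhat - φ j‖ := by
  have hON : Orthonormal ℝ (ι ∘ φ) := orthonormal_iff_ite.2 horth
  have hφW (k : Fin N) : φ k ∈ W := hspan ▸ Submodule.subset_span ⟨k, rfl⟩
  have hιGu : ι (G uhat) ∈ Submodule.span ℝ (Set.range (ι ∘ φ)) := by
    rw [Set.range_comp, Submodule.span_image]
    exact Submodule.mem_map_of_mem (hspan ▸ hGmem uhat)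
  have hcoef (k : Fin N) (hk : k ≠ j) :
      |⟪ι (φ k), ι (G uhat)⟫| ≤ Λsep * |⟪ι (φ k), ι (uhat - G uhat)⟫| :=
    abs_le_mul_abs_of_sub_mul_eq hlamhat (hsep k hk) <|
      sub_mul_inner_map_eq_of_galerkin ι (hGproj uhat _ (hφW k)) (huhateig _ (hφW k))
        (heig k _ (hGmem uhat))
  calc ‖ι (G uhat - ⟪ι (G uhat), ι (φ j)⟫ • φ j)‖
      = ‖ι (G uhat) - ⟪ι (φ j), ι (G uhat)⟫ • ι (φ j)‖ := by
        rw [map_sub, map_smul, real_inner_comm]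
    _ ≤ Λsep * ‖ι (uhat - G uhat)‖ :=
        hON.norm_sub_inner_smul_le_of_mem_span hιGu j hΛsep hcoef
    _ ≤ Λsep * (ε * ‖uhat - G uhat‖) := by gcongr; exact hdual uhat
    _ ≤ Λsep * (ε * ‖uhat - φ j‖) := by
        gcongr
        exact norm_sub_le_norm_sub_of_inner_eq_zero (hGproj uhat _ (W.sub_mem (hGmem uhat) (hφW j)))
    _ = Λsep * ε * ‖uhat - φ j‖ := by ring
end
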